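/- arXiv:2204.08428 — 2 statements merged into one kernel-verified Lean document; each statement's English description precedes it below -/
import Mathlib

section
/- Let C be a self-homothetic attractor as in the context, with system of balls S_I := f_{i₁} ∘ ⋯ ∘ f_{i_k}(B[0,1]), and assume h_∅ := max_{x ∈ B[0,1]} dist(x, C) > 0. Then the thickness satisfies τ(C, {S_I}) ≥ (min_j λ_j) / h_∅. -/
open Metric Set
open scoped ENNReal

/-- Composition `f_{i₁} ∘ ⋯ ∘ f_{i_k}` of the maps of an IFS along the word `I`. -/
def wordMap {E : Type*} {K : Type*} (f : K → E → E) (I : List K) : E → E :=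
  (I.map f).foldl (· ∘ ·) id

/-! Each homothety `f_i` is `λ_i`-Lipschitz and maps `C` into itself, so `f_I` is `λ_I`-Lipschitz
and maps `C` into itself. Hence every point of `S_I = f_I(B[0,1])` lies within `λ_I h_∅` of `C`,
i.e. `h_I ≤ λ_I h_∅`, while `min_i rad S_{I,i} = λ_I min_j λ_j`. -/

open scoped NNReal

section WordMap

variable {E K : Type*}

lemma wordMap_cons (f : K → E → E) (i : K) (I : List K) :
    wordMap f (i :: I) = f i ∘ wordMap f I := by
  have : Std.Associative (fun g h : E → E => g ∘ h) := ⟨fun _ _ _ => rfl⟩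
  exact List.foldl_assoc (a₁ := f i) (a₂ := id)

variable {f : K → E → E}

lemma mapsTo_wordMap {s : Set E} (hf : ∀ i, MapsTo (f i) s s) (I : List K) :
    MapsTo (wordMap f I) s s := by
  induction I with
  | nil => exact mapsTo_id s
  | cons i I ih => rw [wordMap_cons]; exact (hf i).comp ih

lemma lipschitzWith_wordMap [PseudoEMetricSpace E] {c : K → ℝ≥0}
    (hf : ∀ i, LipschitzWith (c i) (f i)) (I : List K) :
    LipschitzWith (I.map c).prod (wordMap f I) := by
  induction I with
  | nil => exact LipschitzWith.id
  | cons i I ih => rw [wordMap_cons, List.map_cons, List.prod_cons]; exact (hf i).comp ih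

end WordMap

section InfDist

variable {α : Type*} [PseudoMetricSpace α] {C s : Set α}

lemma LipschitzWith.infDist_le_mul_of_mapsTo {g : α → α} {c : ℝ≥0} (hg : LipschitzWith c g)
    (hgC : MapsTo g C C) (x : α) : infDist (g x) C ≤ c * infDist x C := by
  rcases C.eq_empty_or_nonempty with rfl | hC
  · simp
  have : Nonempty C := hC.to_subtype
  rw [infDist_eq_iInf (x := x), Real.mul_iInf_of_nonneg c.coe_nonneg]
  exact le_ciInf fun y =>
    (infDist_le_dist_of_mem (hgC y.2)).trans (hg.dist_le_mul x y)

lemma infDist_le_biSup_infDist (hs : Bornology.IsBounded s) {x : α} (hx : x ∈ s) :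
    infDist x C ≤ ⨆ y ∈ s, infDist y C := by
  refine le_ciSup₂ (f := fun y (_ : y ∈ s) => infDist y C) ?_ x hx
  exact ((lipschitz_infDist_pt C).isBounded_image hs).bddAbove.mono <|
    iUnion_subset fun y => range_subset_iff.2 fun hy => mem_image_of_mem (infDist · C) hy

lemma biSup_infDist_nonneg : 0 ≤ ⨆ x ∈ s, infDist x C :=
  Real.iSup_nonneg fun _ => Real.iSup_nonneg fun _ => infDist_nonneg

lemma LipschitzWith.biSup_infDist_image_le {g : α → α} {c : ℝ≥0} (hg : LipschitzWith c g)
    (hgC : MapsTo g C C) (hs : Bornology.IsBounded s) :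
    ⨆ x ∈ g '' s, infDist x C ≤ c * ⨆ x ∈ s, infDist x C := by
  have hbound : 0 ≤ c * ⨆ x ∈ s, infDist x C := mul_nonneg c.coe_nonneg biSup_infDist_nonneg
  refine Real.iSup_le (fun _ => Real.iSup_le (fun hx => ?_) hbound) hbound
  obtain ⟨y, hy, rfl⟩ := hx
  exact (hg.infDist_le_mul_of_mapsTo hgC y).trans
    (mul_le_mul_of_nonneg_left (infDist_le_biSup_infDist hs hy) c.coe_nonneg)

end InfDist

lemma lipschitzWith_homothety {E : Type*} [NormedAddCommGroup E] [NormedSpace ℝ E] {c : ℝ}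
    (hc : 0 ≤ c) (t : E) : LipschitzWith c.toNNReal (fun x : E => c • x + t) :=
  LipschitzWith.of_dist_le_mul fun x y => by
    rw [dist_add_right, dist_smul₀, Real.norm_of_nonneg hc, Real.coe_toNNReal c hc]

theorem thickness_ge_general {E : Type*} [NormedAddCommGroup E] [NormedSpace ℝ E]
    (m : ℕ) (lam : Fin m → ℝ) (t : Fin m → E)
    (hlam : ∀ i, lam i ∈ Set.Ioo (0 : ℝ) 1)
    (C : Set E)
    (hC : C = ⋃ i, (fun x => lam i • x + t i) '' C) :
    ENNReal.ofReal ((⨅ j, lam j) / (⨆ x ∈ closedBall (0 : E) 1, infDist x C))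
      ≤ ⨅ I : List (Fin m),
          ENNReal.ofReal (⨅ i : Fin m, ((I ++ [i]).map lam).prod) /
            ENNReal.ofReal (⨆ x ∈ wordMap (fun i x => lam i • x + t i) I ''
              closedBall (0 : E) 1, infDist x C) := by
  set f : Fin m → E → E := fun i x => lam i • x + t i
  set h₀ := ⨆ x ∈ closedBall (0 : E) 1, infDist x C
  have hmaps : ∀ i, MapsTo (f i) C C := fun i =>
    mapsTo_iff_image_subset.2 ((subset_iUnion (fun i => f i '' C) i).trans hC.superset)
  refine le_iInf fun I => ?_
  set lamI := (I.map lam).prod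
  have hlamI : 0 < lamI := List.prod_pos <| by simpa using fun i _ => (hlam i).1
  have hden : ⨆ x ∈ wordMap f I '' closedBall 0 1, infDist x C ≤ lamI * h₀ := by
    have hlip := lipschitzWith_wordMap (fun i => lipschitzWith_homothety (hlam i).1.le (t i)) I
    convert hlip.biSup_infDist_image_le (mapsTo_wordMap hmaps I) isBounded_closedBall using 2
    simp [lamI, NNReal.coe_list_prod, Function.comp_def, fun i => (hlam i).1.le]
  have hnum : lamI * ⨅ j, lam j = ⨅ i, ((I ++ [i]).map lam).prod := by
    simp [Real.mul_iInf_of_nonneg hlamI.le, lamI]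
  calc ENNReal.ofReal ((⨅ j, lam j) / h₀)
      ≤ ENNReal.ofReal (⨅ j, lam j) / ENNReal.ofReal h₀ :=
        ENNReal.ofReal_div_le biSup_infDist_nonneg
    _ = ENNReal.ofReal (lamI * ⨅ j, lam j) / ENNReal.ofReal (lamI * h₀) := by
        rw [ENNReal.ofReal_mul hlamI.le, ENNReal.ofReal_mul hlamI.le,
          ENNReal.mul_div_mul_left _ _ (by simpa using hlamI) ENNReal.ofReal_ne_top]
    _ ≤ _ := by rw [hnum]; gcongr

/-- For a self-homothetic attractor `C` with system of balls
`S_I = f_{i₁} ∘ ⋯ ∘ f_{i_k}(B[0,1])` (so `rad S_I = λ_I = λ_{i₁}⋯λ_{i_k}`) and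
`h_∅ := max_{x ∈ B[0,1]} dist(x,C) > 0`, the thickness
`τ(C,{S_I}) = inf_I (min_i rad S_{I,i})/h_{S_I}` is at least `(min_j λ_j)/h_∅`. -/
theorem thickness_ge {E : Type*} [NormedAddCommGroup E] [NormedSpace ℝ E]
    [FiniteDimensional ℝ E]
    (m : ℕ) (hm : 0 < m) (lam : Fin m → ℝ) (t : Fin m → E)
    (hlam : ∀ i, lam i ∈ Set.Ioo (0 : ℝ) 1)
    (hsub : ∀ i, closedBall (t i) (lam i) ⊆ closedBall (0 : E) 1)
    (C : Set E) (hCc : IsCompact C) (hCne : C.Nonempty)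
    (hC : C = ⋃ i, (fun x => lam i • x + t i) '' C)
    (hpos : 0 < ⨆ x ∈ closedBall (0 : E) 1, infDist x C) :
    ENNReal.ofReal ((⨅ j, lam j) / (⨆ x ∈ closedBall (0 : E) 1, infDist x C))
      ≤ ⨅ I : List (Fin m),
          ENNReal.ofReal (⨅ i : Fin m, ((I ++ [i]).map lam).prod) /
            ENNReal.ofReal (⨆ x ∈ wordMap (fun i x => lam i • x + t i) I ''
              closedBall (0 : E) 1, infDist x C) :=
  thickness_ge_general m lam t hlam C hC
end

section
/- Let C ⊆ B_∞[0,1] ⊆ ℝ^d be a compact set with a system of balls {S_I} in the ℓ^∞ norm, S_I = B_∞[z_I, r_I] with S_∅ ⊆ B_∞[0,1], and assume min_j r_{I,j} ≥ λ r_I for some λ > 0 and all words I and children j. Let ε ∈ (0,1) and let f be a C¹ map on an open neighborhood of B_∞[0,1] in ℝ^d, with values in ℝ^d, such that ‖Df(x) − Id‖_∞ < ε for all x ∈ B_∞[0,1], where ‖A‖_∞ := max_{1 ≤ i ≤ d} ∑_{j=1}^d |A_{ij}| is the operator norm induced by the ℓ^∞ norm. Then the balls R_I := B_∞[f(z_I),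 (1 + ε) r_I] form a system of balls for the compact set f(C), and τ(f(C), {R_I}) ≥ τ(C, {S_I}) / (1 + τ(C, {S_I}) · 2ε/((1 + ε)λ)). -/
open Metric Set Filter
open scoped ENNReal

/-- A system of balls in a normed space: closed balls indexed by finite words of
natural numbers, each ball containing its finitely many (at least one) children,
with radii tending to zero along infinite words. -/
structure BallSystem (E : Type*) [NormedAddCommGroup E] where
  center : List ℕ → E
  radius : List ℕ → ℝ
  numChildren : List ℕ → ℕ
  radius_pos : ∀ I, 0 < radius I
  numChildren_pos : ∀ I, 0 < numChildren I
  child_subset : ∀ I, ∀ i < numChildren I,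
    Metric.closedBall (center (I ++ [i])) (radius (I ++ [i])) ⊆
      Metric.closedBall (center I) (radius I)
  radius_tendsto : ∀ ω : ℕ → ℕ,
    Filter.Tendsto (fun n => radius (List.ofFn fun k : Fin n => ω k)) Filter.atTop (nhds 0)

namespace BallSystem

variable {E : Type*} [NormedAddCommGroup E]

/-- The ball with index `I`. -/
def ball (B : BallSystem E) (I : List ℕ) : Set E :=
  Metric.closedBall (B.center I) (B.radius I)

/-- A word is valid if each letter indexes an actual child of the preceding prefix. -/
def valid (B : BallSystem E) (I : List ℕ) : Prop :=
  ∀ n : Fin I.length, I.get n < B.numChildren (I.take n.1)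

/-- `B` is a system of balls for the set `C`: `C = ⋂_n ⋃_{|I| = n} S_I`. -/
def IsSystemFor (B : BallSystem E) (C : Set E) : Prop :=
  C = ⋂ n : ℕ, ⋃ I ∈ {I : List ℕ | B.valid I ∧ I.length = n}, B.ball I

/-- `h_I := max_{x ∈ S_I} dist (x, C)`. -/
noncomputable def h (B : BallSystem E) (C : Set E) (I : List ℕ) : ℝ :=
  ⨆ x ∈ B.ball I, infDist x C

/-- The minimum of the radii of the children of `S_I`. -/
noncomputable def minChildRadius (B : BallSystem E) (I : List ℕ) : ℝ :=
  ⨅ i : Fin (B.numChildren I), B.radius (I ++ [i.1])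

/-- The thickness of `C` associated to the system of balls `B`, with values in `[0, ∞]`
(the ratio `min_i rad S_{I,i} / h_I` being interpreted as `∞` when `h_I = 0`). -/
noncomputable def thickness (B : BallSystem E) (C : Set E) : ℝ≥0∞ :=
  ⨅ I : {I : List ℕ // B.valid I},
    ENNReal.ofReal (B.minChildRadius I.1) / ENNReal.ofReal (B.h C I.1)

/-- The system is `r`-uniformly dense: every closed ball contained in `S_I` with radius
at least `r · rad S_I` contains a child of `S_I`. -/
def UniformlyDense (B : BallSystem E) (r : ℝ) : Prop :=
  ∀ I, B.valid I → ∀ (x : E) (ρ : ℝ), Metric.closedBall x ρ ⊆ B.ball I →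
    r * B.radius I ≤ ρ → ∃ i < B.numChildren I, B.ball (I ++ [i]) ⊆ Metric.closedBall x ρ

end BallSystem


/-!
On the convex ball `B_∞[0,1]` the bound `‖Df - Id‖ < ε` makes `f - id` an `ε`-Lipschitz map,
so `f` is `(1 + ε)`-Lipschitz there. Hence `f` maps `S_I` into `R_I` and the balls `R_I` are
nested like the `S_I`; conversely, by Kőnig's lemma a point lying in image balls of every level
lies in the image balls along one infinite branch, which shrink to the image of the point of `C`
cut out by that branch.

For the thickness, every `x ∈ R_I` is within `2 ε r_I` of some `f w` with `w ∈ S_I` (take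
`w = z_I + (x - f z_I) / (1 + ε)`), so `h'_I ≤ (1 + ε) h_I + 2 ε r_I`, while the children radii
are multiplied by `1 + ε` and are at least `λ r_I`. With `t = min_j r_{I,j} / h_I ≥ τ`, this gives
`min_j rad R_{I,j} / h'_I ≥ t / (1 + t · 2ε / ((1 + ε) λ))`, which is monotone in `t`.
-/

open scoped NNReal Topology

lemma List.take_append_getD_of_length_eq_succ {L : List ℕ} {n : ℕ} (h : L.length = n + 1) :
    L.take n ++ [L.getD n 0] = L := by
  conv_rhs => rw [← List.take_length (l := L), h, List.take_add_one]
  simp [List.getElem?_eq_getElem (show n < L.length by omega), List.getD_eq_getElem?_getD]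

def wordPrefix (ω : ℕ → ℕ) (n : ℕ) : List ℕ :=
  List.ofFn fun k : Fin n => ω k

@[simp]
lemma length_wordPrefix (ω : ℕ → ℕ) (n : ℕ) : (wordPrefix ω n).length = n :=
  List.length_ofFn

lemma wordPrefix_succ (ω : ℕ → ℕ) (n : ℕ) : wordPrefix ω (n + 1) = wordPrefix ω n ++ [ω n] := by
  rw [wordPrefix, List.ofFn_succ', List.concat_eq_append]
  rfl

lemma take_wordPrefix (ω : ℕ → ℕ) {m n : ℕ} (h : n ≤ m) :
    (wordPrefix ω m).take n = wordPrefix ω n := by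
  induction m, h using Nat.le_induction with
  | base => simp
  | succ m hnm ih =>
    rw [wordPrefix_succ, List.take_append_of_le_length (by simpa using hnm), ih]

/-- Kőnig's lemma. -/
theorem exists_forall_wordPrefix_mem {T : Set (List ℕ)} (htake : ∀ I ∈ T, ∀ n, I.take n ∈ T)
    (hfin : ∀ I, {i | I ++ [i] ∈ T}.Finite) (hlen : ∀ n, ∃ I ∈ T, I.length = n) :
    ∃ ω : ℕ → ℕ, ∀ n, wordPrefix ω n ∈ T := by
  let α (n : ℕ) := {I : List ℕ // I ∈ T ∧ I.length = n}
  have : Subsingleton (α 0) := ⟨fun a b => Subtype.ext <| by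
    rw [List.length_eq_zero_iff.1 a.2.2, List.length_eq_zero_iff.1 b.2.2]⟩
  have : ∀ n, Nonempty (α n) := fun n => let ⟨I, hI, hIn⟩ := hlen n; ⟨⟨I, hI, hIn⟩⟩
  let π {i j : ℕ} (hij : i ≤ j) (a : α j) : α i :=
    ⟨a.1.take i, htake _ a.2.1 i, by simp [a.2.2, hij]⟩
  have hπ {i : ℕ} (b : α (i + 1)) : (π (Nat.le_succ i) b).1 ++ [b.1.getD i 0] = b.1 :=
    List.take_append_getD_of_length_eq_succ b.2.2
  obtain ⟨g, hg⟩ := exists_seq_forall_proj_of_forall_finite π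
    (fun i a => Subtype.ext <| by simp [π, a.2.2])
    (fun i j k hij hjk a => Subtype.ext <| by simp [π, List.take_take, min_eq_left hij])
    (fun i a => by
      refine Set.Finite.of_finite_image (f := fun b : α (i + 1) => b.1.getD i 0)
        ((hfin a.1).subset ?_) fun b hb c hc hbc => ?_
      · rintro _ ⟨b, rfl, rfl⟩
        show (π (Nat.le_succ i) b).1 ++ [b.1.getD i 0] ∈ T
        exact (hπ b).symm ▸ b.2.1
      · refine Subtype.ext ?_
        rw [← hπ b, ← hπ c, hb, hc]
        exact congrArg (a.1 ++ [·]) hbc)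
  refine ⟨fun k => (g (k + 1)).1.getD k 0, fun n => ?_⟩
  suffices (g n).1 = wordPrefix (fun k => (g (k + 1)).1.getD k 0) n from this ▸ (g n).2.1
  induction n with
  | zero => exact List.length_eq_zero_iff.1 (g 0).2.2
  | succ n ih => rw [wordPrefix_succ, ← ih, ← hg (Nat.le_succ n), hπ]

lemma ENNReal.div_one_add_mul_le_div_add_mul {τ a h c : ℝ≥0∞} (ha₀ : a ≠ 0) (ha : a ≠ ⊤)
    (hτ : τ ≤ a / h) : τ / (1 + τ * c) ≤ a / (h + c * a) := by
  rcases eq_or_ne τ 0 with rfl | hτ₀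
  · simp
  rcases eq_or_ne τ ⊤ with rfl | hτt
  · rcases eq_or_ne c 0 with rfl | hc
    · simpa using hτ
    · simp [ENNReal.top_mul hc]
  have hτinv : τ / (1 + τ * c) = (τ⁻¹ + c)⁻¹ := by
    conv_lhs => rw [← ENNReal.inv_div (by simp [hτt]) (by simp)]
    rw [ENNReal.add_div, one_div, mul_comm, ENNReal.mul_div_cancel_right hτ₀ hτt]
  have hainv : a / (h + c * a) = (h / a + c)⁻¹ := by
    conv_lhs => rw [← ENNReal.inv_div (Or.inl ha) (Or.inl ha₀)]
    rw [ENNReal.add_div, ENNReal.mul_div_cancel_right ha₀ ha]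
  rw [hτinv, hainv]
  refine ENNReal.inv_le_inv.2 (add_le_add_left ?_ c)
  rw [← ENNReal.inv_div (Or.inl ha) (Or.inl ha₀)] at hτ
  exact ENNReal.le_inv_iff_le_inv.1 hτ

namespace BallSystem

variable {E : Type*} [NormedAddCommGroup E] {B : BallSystem E} {C : Set E} {I : List ℕ}

lemma valid_iff : B.valid I ↔ ∀ (n : ℕ) (h : n < I.length), I[n] < B.numChildren (I.take n) :=
  ⟨fun hI n h => hI ⟨n, h⟩, fun hI n => hI n n.2⟩

lemma valid.take (hI : B.valid I) (n : ℕ) : B.valid (I.take n) := by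
  rw [valid_iff] at hI ⊢
  intro k hk
  simp only [List.length_take, lt_min_iff] at hk
  simpa [List.take_take, min_eq_left hk.1.le] using hI k hk.2

lemma valid_append_singleton_iff {i : ℕ} :
    B.valid (I ++ [i]) ↔ B.valid I ∧ i < B.numChildren I := by
  simp only [valid_iff, List.length_append, List.length_singleton]
  refine ⟨fun h => ⟨fun n hn => ?_, ?_⟩, fun ⟨hI, hi⟩ n hn => ?_⟩
  · simpa [List.getElem_append_left hn, List.take_append_of_le_length hn.le] using h n (by omega)
  · simpa using h I.length (by omega)
  · rcases (show n < I.length ∨ n = I.length by omega) with hn | rfl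
    · simpa [List.getElem_append_left hn, List.take_append_of_le_length hn.le] using hI n hn
    · simpa using hi

lemma ball_subset_ball_take (hI : B.valid I) (n : ℕ) : B.ball I ⊆ B.ball (I.take n) := by
  induction I using List.reverseRecOn with
  | nil => simp
  | append_singleton J i ih =>
    obtain ⟨hJ, hi⟩ := valid_append_singleton_iff.1 hI
    rcases le_or_gt (J.length + 1) n with hn | hn
    · rw [List.take_of_length_le (by simpa using hn)]
    · rw [List.take_append_of_le_length (by omega)]
      exact (B.child_subset J i hi).trans (ih hJ)

lemma tendsto_radius_wordPrefix (B : BallSystem E) (ω : ℕ → ℕ) :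
    Tendsto (fun n => B.radius (wordPrefix ω n)) atTop (𝓝 0) :=
  B.radius_tendsto ω

lemma center_mem_ball (B : BallSystem E) (I : List ℕ) : B.center I ∈ B.ball I :=
  mem_closedBall_self (B.radius_pos I).le

lemma h_nonneg (B : BallSystem E) (C : Set E) (I : List ℕ) : 0 ≤ B.h C I :=
  Real.iSup_nonneg fun _ => Real.iSup_nonneg fun _ => infDist_nonneg

lemma infDist_le_h {x : E} (hx : x ∈ B.ball I) : infDist x C ≤ B.h C I := by
  have hbdd : BddAbove (range fun y => ⨆ _ : y ∈ B.ball I, infDist y C) := by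
    refine ⟨infDist (B.center I) C + B.radius I, forall_mem_range.2 fun y => ?_⟩
    by_cases hy : y ∈ B.ball I
    · rw [ciSup_pos hy]
      exact infDist_le_infDist_add_dist.trans (add_le_add_right hy _)
    · simp only [hy, Real.iSup_of_isEmpty]
      exact add_nonneg infDist_nonneg (B.radius_pos I).le
  exact le_ciSup_of_le hbdd x (by rw [ciSup_pos hx])

lemma h_le {a : ℝ} (ha : 0 ≤ a) (hb : ∀ x ∈ B.ball I, infDist x C ≤ a) : B.h C I ≤ a :=
  Real.iSup_le (fun x => Real.iSup_le (hb x) ha) ha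

lemma IsSystemFor.exists_mem_ball (hB : B.IsSystemFor C) {x : E} (hx : x ∈ C) (n : ℕ) :
    ∃ I, B.valid I ∧ I.length = n ∧ x ∈ B.ball I := by
  rw [hB] at hx
  simpa [and_assoc] using mem_iInter.1 hx n

lemma IsSystemFor.exists_mem_forall_mem_ball [CompleteSpace E] (hB : B.IsSystemFor C)
    {ω : ℕ → ℕ} (hω : ∀ n, B.valid (wordPrefix ω n)) :
    ∃ x ∈ C, ∀ n, x ∈ B.ball (wordPrefix ω n) := by
  have hanti : Antitone fun n => B.ball (wordPrefix ω n) := by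
    refine antitone_nat_of_succ_le fun n => ?_
    have := hω (n + 1)
    rw [wordPrefix_succ] at this ⊢
    exact B.child_subset _ _ (valid_append_singleton_iff.1 this).2
  have hdiam : Tendsto (fun n => diam (B.ball (wordPrefix ω n))) atTop (𝓝 0) := by
    refine squeeze_zero (fun n => diam_nonneg) (fun n => diam_closedBall (B.radius_pos _).le) ?_
    simpa using (B.tendsto_radius_wordPrefix ω).const_mul 2
  obtain ⟨x, hx⟩ := nonempty_iInter_of_nonempty_biInter (fun n => isClosed_closedBall)
    (fun n => isBounded_closedBall)
    (fun N => ⟨B.center (wordPrefix ω N),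
      mem_iInter₂.2 fun n hn => hanti hn (B.center_mem_ball _)⟩)
    hdiam
  rw [mem_iInter] at hx
  refine ⟨x, ?_, hx⟩
  rw [hB]
  exact mem_iInter.2 fun n => mem_biUnion ⟨hω n, length_wordPrefix ω n⟩ (hx n)

end BallSystem

lemma LipschitzOnWith.infDist_image_le {α β : Type*} [PseudoMetricSpace α] [PseudoMetricSpace β]
    {f : α → β} {K : ℝ≥0} {s C : Set α}
    (hf : LipschitzOnWith K f s) {w : α} (hw : w ∈ s) (hC : C ⊆ s) :
    infDist (f w) (f '' C) ≤ K * infDist w C := by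
  rcases C.eq_empty_or_nonempty with rfl | hne
  · simp
  have := hne.to_subtype
  rw [infDist_eq_iInf (x := w), Real.mul_iInf_of_nonneg K.coe_nonneg]
  exact le_ciInf fun c => (infDist_le_dist_of_mem (mem_image_of_mem f c.2)).trans
    (hf.dist_le_mul w hw c (hC c.2))

section Normed

variable {E F : Type*} [NormedAddCommGroup E] [NormedSpace ℝ E] [NormedAddCommGroup F]

lemma dist_add_le_of_closedBall_subset_closedBall [Nontrivial E] {x y : E} {r r' : ℝ}
    (hr : 0 ≤ r) (h : closedBall x r ⊆ closedBall y r') : dist x y + r ≤ r' := by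
  obtain ⟨u, hu, hxy⟩ : ∃ u : E, ‖u‖ = 1 ∧ x - y = ‖x - y‖ • u := by
    by_cases hxy : x = y
    · obtain ⟨u, hu⟩ := exists_norm_eq E zero_le_one
      exact ⟨u, hu, by simp [hxy]⟩
    · have hne : x - y ≠ 0 := sub_ne_zero.2 hxy
      refine ⟨‖x - y‖⁻¹ • (x - y), norm_smul_inv_norm hne, ?_⟩
      rw [smul_smul, mul_inv_cancel₀ (norm_ne_zero_iff.2 hne), one_smul]
  have hmem : x + r • u ∈ closedBall y r' :=
    h (by simp [dist_eq_norm, norm_smul, hu, abs_of_nonneg hr])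
  have hsub : x + r • u - y = (‖x - y‖ + r) • u := by
    rw [add_smul, ← hxy]; abel
  rw [mem_closedBall, dist_eq_norm, hsub, norm_smul, hu, mul_one,
    Real.norm_of_nonneg (by positivity)] at hmem
  rwa [dist_eq_norm]

lemma LipschitzOnWith.closedBall_subset_closedBall [Nontrivial E] {f : E → F} {K : ℝ≥0}
    {s : Set E} (hf : LipschitzOnWith K f s) {x y : E} {r r' : ℝ} (hr : 0 ≤ r) (hx : x ∈ s)
    (hy : y ∈ s) (h : closedBall x r ⊆ closedBall y r') :
    closedBall (f x) (K * r) ⊆ closedBall (f y) (K * r') := by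
  refine closedBall_subset_closedBall' ?_
  have := dist_add_le_of_closedBall_subset_closedBall hr h
  have := hf.dist_le_mul x hx y hy
  nlinarith [K.coe_nonneg, dist_nonneg (x := x) (y := y)]

lemma LipschitzOnWith.exists_mem_closedBall_dist_le {f : E → E} {δ : ℝ≥0} {s : Set E}
    (hf : LipschitzOnWith δ (f - id) s) {z x : E} {r : ℝ} (hball : closedBall z r ⊆ s)
    (hx : x ∈ closedBall (f z) ((1 + δ) * r)) :
    ∃ w ∈ closedBall z r, dist x (f w) ≤ 2 * δ * r := by
  have hδ : (0 : ℝ) < 1 + δ := by positivity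
  rw [mem_closedBall, dist_eq_norm] at hx
  set w := z + (1 + δ : ℝ)⁻¹ • (x - f z)
  have hxz : x - f z = (1 + δ : ℝ) • (w - z) := by
    simp [w, smul_smul, mul_inv_cancel₀ hδ.ne']
  have hwz : ‖w - z‖ ≤ r := by
    rw [hxz, norm_smul, Real.norm_of_nonneg hδ.le] at hx
    exact le_of_mul_le_mul_left hx hδ
  have hw : w ∈ closedBall z r := by rwa [mem_closedBall, dist_eq_norm]
  refine ⟨w, hw, ?_⟩
  have hxw : x - f w = (δ : ℝ) • (w - z) - ((f w - w) - (f z - z)) := by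
    rw [sub_eq_iff_eq_add.1 hxz]
    module
  calc dist x (f w) = ‖(δ : ℝ) • (w - z) - ((f w - w) - (f z - z))‖ := by
        rw [dist_eq_norm, hxw]
    _ ≤ δ * ‖w - z‖ + δ * ‖w - z‖ := by
        refine (_root_.norm_sub_le _ _).trans (add_le_add ?_ ?_)
        · rw [norm_smul, Real.norm_of_nonneg δ.coe_nonneg]
        · have hz : z ∈ s := hball (mem_closedBall_self ((norm_nonneg _).trans hwz))
          simpa using hf.norm_sub_le (hball hw) hz
    _ ≤ 2 * δ * r := by nlinarith [δ.coe_nonneg]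

lemma Convex.lipschitzOnWith_sub_id {f : E → E} {s : Set E} {δ : ℝ≥0} (hs : Convex ℝ s)
    (hf : ∀ x ∈ s, DifferentiableAt ℝ f x)
    (hδ : ∀ x ∈ s, ‖fderiv ℝ f x - ContinuousLinearMap.id ℝ E‖ ≤ δ) :
    LipschitzOnWith δ (f - id) s :=
  hs.lipschitzOnWith_of_nnnorm_hasFDerivWithin_le
    (fun x hx => ((hf x hx).hasFDerivAt.sub (hasFDerivAt_id x)).hasFDerivWithinAt)
    fun x hx => by simpa [← NNReal.coe_le_coe] using hδ x hx

end Normed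

namespace BallSystem

variable {E F : Type*} [NormedAddCommGroup E] [NormedSpace ℝ E] [Nontrivial E]
  [NormedAddCommGroup F] (B : BallSystem E) {f : E → F} {K : ℝ≥0} {s : Set E}

open scoped Classical in
/-- On the words that are not valid, which play no role, nested balls of radii `2⁻ⁿ` about `0`
are used. -/
noncomputable def image (hK : 0 < K) (hf : LipschitzOnWith K f s)
    (hs : ∀ I, B.valid I → B.ball I ⊆ s) : BallSystem F where
  center I := if B.valid I then f (B.center I) else 0
  radius I := if B.valid I then K * B.radius I else (1 / 2) ^ I.length
  numChildren := B.numChildren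
  radius_pos I := by
    have := B.radius_pos I
    split_ifs <;> positivity
  numChildren_pos := B.numChildren_pos
  child_subset I i hi := by
    by_cases hI : B.valid I
    · have hIi : B.valid (I ++ [i]) := valid_append_singleton_iff.2 ⟨hI, hi⟩
      simp only [if_pos hI, if_pos hIi]
      exact hf.closedBall_subset_closedBall (B.radius_pos _).le
        (hs _ hIi (B.center_mem_ball _)) (hs _ hI (B.center_mem_ball _)) (B.child_subset I i hi)
    · have hIi : ¬ B.valid (I ++ [i]) := fun h => hI (valid_append_singleton_iff.1 h).1
      simp only [if_neg hI, if_neg hIi, List.length_append, List.length_singleton]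
      exact closedBall_subset_closedBall
        (pow_le_pow_of_le_one (by norm_num) (by norm_num) le_self_add)
  radius_tendsto ω := by
    show Tendsto (fun n => if B.valid (wordPrefix ω n) then K * B.radius (wordPrefix ω n)
      else (1 / 2 : ℝ) ^ (wordPrefix ω n).length) atTop (𝓝 0)
    by_cases hω : ∀ n, B.valid (wordPrefix ω n)
    · simpa [hω] using (B.tendsto_radius_wordPrefix ω).const_mul (K : ℝ)
    · push Not at hω
      obtain ⟨N, hN⟩ := hω
      refine (tendsto_pow_atTop_nhds_zero_of_lt_one (r := (1 / 2 : ℝ)) (by norm_num)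
        (by norm_num)).congr' ?_
      filter_upwards [eventually_ge_atTop N] with n hn
      have hinv : ¬ B.valid (wordPrefix ω n) := fun h =>
        hN (take_wordPrefix ω hn ▸ h.take N)
      simp [hinv]

variable {B} {hK : 0 < K} {hf : LipschitzOnWith K f s} {hs : ∀ I, B.valid I → B.ball I ⊆ s}
  {I : List ℕ}

lemma image_center (hI : B.valid I) : (B.image hK hf hs).center I = f (B.center I) :=
  if_pos hI

lemma image_radius (hI : B.valid I) : (B.image hK hf hs).radius I = K * B.radius I :=
  if_pos hI

lemma image_ball (hI : B.valid I) :
    (B.image hK hf hs).ball I = closedBall (f (B.center I)) (K * B.radius I) := by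
  rw [ball, image_center hI, image_radius hI]

theorem IsSystemFor.image [CompleteSpace E] {C : Set E} (hB : B.IsSystemFor C) :
    (B.image hK hf hs).IsSystemFor (f '' C) := by
  set R := B.image hK hf hs
  refine subset_antisymm ?_ fun y hy => ?_
  · rintro _ ⟨x, hx, rfl⟩
    refine mem_iInter.2 fun n => ?_
    obtain ⟨I, hI, hIn, hxI⟩ := hB.exists_mem_ball hx n
    refine mem_biUnion (x := I) ⟨hI, hIn⟩ ?_
    rw [image_ball hI, mem_closedBall]
    exact (hf.dist_le_mul x (hs I hI hxI) _ (hs I hI (B.center_mem_ball I))).trans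
      (mul_le_mul_of_nonneg_left hxI K.coe_nonneg)
  obtain ⟨ω, hω⟩ := exists_forall_wordPrefix_mem (T := {I | B.valid I ∧ y ∈ R.ball I})
    (fun I hI n => ⟨hI.1.take n, R.ball_subset_ball_take hI.1 n hI.2⟩)
    (fun I => (finite_Iio (B.numChildren I)).subset fun i hi =>
      (valid_append_singleton_iff.1 hi.1).2)
    (fun n => by
      obtain ⟨I, ⟨hI, hIn⟩, hyI⟩ := mem_iUnion₂.1 (mem_iInter.1 hy n)
      exact ⟨I, ⟨hI, hyI⟩, hIn⟩)
  obtain ⟨x, hx, hxω⟩ := hB.exists_mem_forall_mem_ball fun n => (hω n).1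
  refine ⟨x, hx, dist_le_zero.1 ?_⟩
  refine ge_of_tendsto' (by simpa using (B.tendsto_radius_wordPrefix ω).const_mul (2 * K : ℝ))
    fun n => ?_
  set c := B.center (wordPrefix ω n)
  have hyc : dist (f c) y ≤ K * B.radius (wordPrefix ω n) := by
    rw [dist_comm, ← mem_closedBall, ← image_ball (hω n).1]
    exact (hω n).2
  have hxc : dist (f x) (f c) ≤ K * B.radius (wordPrefix ω n) :=
    (hf.dist_le_mul x (hs _ (hω n).1 (hxω n)) c (hs _ (hω n).1 (B.center_mem_ball _))).trans
      (mul_le_mul_of_nonneg_left (hxω n) K.coe_nonneg)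
  linarith [dist_triangle (f x) (f c) y]

theorem h_image_le {δ : ℝ≥0} {f : E → E} {hK : 0 < 1 + δ} {hf : LipschitzOnWith (1 + δ) f s}
    {hs : ∀ I, B.valid I → B.ball I ⊆ s} (hδ : LipschitzOnWith δ (f - id) s) {C : Set E}
    (hC : C ⊆ s) (hI : B.valid I) :
    (B.image hK hf hs).h (f '' C) I ≤ (1 + δ) * B.h C I + 2 * δ * B.radius I := by
  have hr := B.radius_pos I
  have hh := B.h_nonneg C I
  refine h_le (by positivity) fun x hx => ?_
  rw [image_ball hI] at hx
  obtain ⟨w, hw, hxw⟩ := hδ.exists_mem_closedBall_dist_le (hs I hI) hx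
  calc infDist x (f '' C) ≤ infDist (f w) (f '' C) + dist x (f w) :=
        infDist_le_infDist_add_dist
    _ ≤ (1 + δ) * infDist w C + 2 * δ * B.radius I :=
        add_le_add (hf.infDist_image_le (hs I hI hw) hC) hxw
    _ ≤ (1 + δ) * B.h C I + 2 * δ * B.radius I := by
        gcongr
        exact infDist_le_h hw

end BallSystem

namespace BallSystem

variable {E F : Type*} [NormedAddCommGroup E] [NormedAddCommGroup F]

theorem thickness_div_le_thickness {B : BallSystem E} {R : BallSystem F} {C : Set E} {D : Set F}
    (hnum : R.numChildren = B.numChildren) {K a lam : ℝ} (hK : 0 < K) (ha : 0 ≤ a)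
    (hlam : 0 < lam) (hrad : ∀ I, B.valid I → R.radius I = K * B.radius I)
    (hh : ∀ I, B.valid I → R.h D I ≤ K * B.h C I + a * B.radius I)
    (hmin : ∀ I, B.valid I → ∀ j < B.numChildren I, lam * B.radius I ≤ B.radius (I ++ [j])) :
    B.thickness C / (1 + B.thickness C * ENNReal.ofReal (a / (K * lam))) ≤ R.thickness D := by
  have hvalid : R.valid = B.valid := by
    ext I
    simp only [valid, hnum]
  refine le_iInf fun ⟨I, hI⟩ => ?_
  rw [hvalid] at hI
  set m := B.minChildRadius I with hm_def
  have hm : lam * B.radius I ≤ m := by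
    have : Nonempty (Fin (B.numChildren I)) := ⟨⟨0, B.numChildren_pos I⟩⟩
    exact le_ciInf fun j => hmin I hI j j.2
  have hRm : R.minChildRadius I = K * m := by
    rw [minChildRadius, hnum, hm_def, minChildRadius, Real.mul_iInf_of_nonneg hK.le]
    exact iInf_congr fun j => hrad _ (valid_append_singleton_iff.2 ⟨hI, j.2⟩)
  have hm₀ : 0 < m := (mul_pos hlam (B.radius_pos I)).trans_le hm
  have hRh : R.h D I ≤ K * (B.h C I + a / (K * lam) * m) := by
    have har : a * B.radius I ≤ a / lam * m := by
      rw [div_mul_eq_mul_div, le_div_iff₀ hlam]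
      nlinarith
    have hK' : K * (a / (K * lam) * m) = a / lam * m := by
      field_simp
    rw [mul_add, hK']
    linarith [hh I hI]
  calc B.thickness C / (1 + B.thickness C * ENNReal.ofReal (a / (K * lam)))
      ≤ ENNReal.ofReal m /
          (ENNReal.ofReal (B.h C I) + ENNReal.ofReal (a / (K * lam)) * ENNReal.ofReal m) :=
        ENNReal.div_one_add_mul_le_div_add_mul (by simpa using hm₀) ENNReal.ofReal_ne_top
          (iInf_le_of_le ⟨I, hI⟩ le_rfl)
    _ = ENNReal.ofReal (K * m) / ENNReal.ofReal (K * (B.h C I + a / (K * lam) * m)) := by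
        rw [ENNReal.ofReal_mul hK.le, ENNReal.ofReal_mul hK.le,
          ENNReal.mul_div_mul_left _ _ (by simpa using hK) ENNReal.ofReal_ne_top,
          ENNReal.ofReal_add (B.h_nonneg C I) (by positivity), ENNReal.ofReal_mul (by positivity)]
    _ ≤ ENNReal.ofReal (R.minChildRadius I) / ENNReal.ofReal (R.h D I) := by
        rw [hRm]
        exact ENNReal.div_le_div_left (ENNReal.ofReal_le_ofReal hRh) _

end BallSystem

theorem thickness_image_C1_general (d : ℕ) (hd : 1 ≤ d)
    (C : Set (Fin d → ℝ))
    (B : BallSystem (Fin d → ℝ)) (hB : B.IsSystemFor C)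
    (hroot : B.ball [] ⊆ Metric.closedBall (0 : Fin d → ℝ) 1)
    (lam : ℝ) (hlam : 0 < lam)
    (hmin : ∀ I, B.valid I → ∀ j < B.numChildren I, lam * B.radius I ≤ B.radius (I ++ [j]))
    (ε : ℝ) (hε : ε ∈ Set.Ioo (0 : ℝ) 1)
    (f : (Fin d → ℝ) → (Fin d → ℝ))
    (U : Set (Fin d → ℝ)) (hU : IsOpen U) (hUball : Metric.closedBall (0 : Fin d → ℝ) 1 ⊆ U)
    (hf : ContDiffOn ℝ 1 f U)
    (hDf : ∀ x ∈ Metric.closedBall (0 : Fin d → ℝ) 1,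
      ‖fderiv ℝ f x - ContinuousLinearMap.id ℝ (Fin d → ℝ)‖ < ε) :
    ∃ R : BallSystem (Fin d → ℝ),
      R.numChildren = B.numChildren ∧
      (∀ I, B.valid I → R.center I = f (B.center I) ∧ R.radius I = (1 + ε) * B.radius I) ∧
      R.IsSystemFor (f '' C) ∧
      B.thickness C / (1 + B.thickness C * ENNReal.ofReal (2 * ε / ((1 + ε) * lam)))
        ≤ R.thickness (f '' C) := by
  have : Nonempty (Fin d) := ⟨⟨0, hd⟩⟩
  set δ : ℝ≥0 := ⟨ε, hε.1.le⟩
  have hδ : LipschitzOnWith δ (f - id) (closedBall 0 1) :=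
    (convex_closedBall 0 1).lipschitzOnWith_sub_id
      (fun x hx => (hf.contDiffAt (hU.mem_nhds (hUball hx))).differentiableAt one_ne_zero)
      fun x hx => (hDf x hx).le
  have hlip : LipschitzOnWith (1 + δ) f (closedBall 0 1) := by
    simpa using LipschitzWith.id.lipschitzOnWith.add hδ
  have hs : ∀ I, B.valid I → B.ball I ⊆ closedBall 0 1 := fun I hI => by
    simpa using (B.ball_subset_ball_take hI 0).trans hroot
  have hC : C ⊆ closedBall 0 1 := fun x hx => by
    obtain ⟨I, hI, -, hxI⟩ := hB.exists_mem_ball hx 0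
    exact hs I hI hxI
  set R := B.image (by positivity) hlip hs
  have hrad : ∀ I, B.valid I → R.radius I = (1 + ε) * B.radius I := fun I hI => by
    rw [BallSystem.image_radius hI, NNReal.coe_add, NNReal.coe_one]
    rfl
  refine ⟨R, rfl, fun I hI => ⟨BallSystem.image_center hI, hrad I hI⟩, hB.image, ?_⟩
  exact BallSystem.thickness_div_le_thickness (B := B) (R := R) (K := 1 + ε) (a := 2 * ε) rfl
    (by linarith [hε.1]) (by linarith [hε.1]) hlam hrad
    (fun I hI => BallSystem.h_image_le hδ hC hI) hmin

/-- Let `C ⊆ B_∞[0,1] ⊆ ℝ^d` be compact with a system of balls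
`S_I = B_∞[z_I, r_I]` (in the `ℓ^∞` norm, which is the norm of `Fin d → ℝ`), with
`S_∅ ⊆ B_∞[0,1]` and `min_j r_{I,j} ≥ λ r_I`. Let `ε ∈ (0,1)` and let `f` be `C¹` on an
open neighborhood of `B_∞[0,1]` with `‖Df(x) - Id‖ < ε` on `B_∞[0,1]` (operator norm
induced by the `ℓ^∞` norm, i.e. the maximal absolute row sum). Then the balls
`R_I = B_∞[f(z_I), (1+ε)r_I]` form a system of balls for `f(C)` and
`τ(f(C), {R_I}) ≥ τ(C, {S_I}) / (1 + τ(C, {S_I})·2ε/((1+ε)λ))`. -/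
theorem thickness_image_C1 (d : ℕ) (hd : 1 ≤ d)
    (C : Set (Fin d → ℝ)) (hCc : IsCompact C)
    (hCsub : C ⊆ Metric.closedBall (0 : Fin d → ℝ) 1)
    (B : BallSystem (Fin d → ℝ)) (hB : B.IsSystemFor C)
    (hroot : B.ball [] ⊆ Metric.closedBall (0 : Fin d → ℝ) 1)
    (lam : ℝ) (hlam : 0 < lam)
    (hmin : ∀ I, B.valid I → ∀ j < B.numChildren I, lam * B.radius I ≤ B.radius (I ++ [j]))
    (ε : ℝ) (hε : ε ∈ Set.Ioo (0 : ℝ) 1)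
    (f : (Fin d → ℝ) → (Fin d → ℝ))
    (U : Set (Fin d → ℝ)) (hU : IsOpen U) (hUball : Metric.closedBall (0 : Fin d → ℝ) 1 ⊆ U)
    (hf : ContDiffOn ℝ 1 f U)
    (hDf : ∀ x ∈ Metric.closedBall (0 : Fin d → ℝ) 1,
      ‖fderiv ℝ f x - ContinuousLinearMap.id ℝ (Fin d → ℝ)‖ < ε) :
    ∃ R : BallSystem (Fin d → ℝ),
      R.numChildren = B.numChildren ∧
      (∀ I, B.valid I → R.center I = f (B.center I) ∧ R.radius I = (1 + ε) * B.radius I) ∧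
      R.IsSystemFor (f '' C) ∧
      B.thickness C / (1 + B.thickness C * ENNReal.ofReal (2 * ε / ((1 + ε) * lam)))
        ≤ R.thickness (f '' C) :=
  thickness_image_C1_general d hd C B hB hroot lam hlam hmin ε hε f U hU hUball hf hDf
end
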